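/- arXiv:1411.1919 — 6 statements merged into one kernel-verified Lean document; each statement's English description precedes it below -/
import Mathlib

section
/- (Lemma 2) Suppose M is a perfect matching of G and the duals y, z satisfy relaxed complementary slackness: (i) z(B) ≥ 0 for every odd set B; (ii) whenever z(B) > 0, M contains exactly ⌊|B|/2⌋ edges with both endpoints in B (active blossoms); (iii) yz(e) ≥ w(e) − 2 for every edge e (near domination); (iv) yz(e) ≤ w(e) for every e ∈ M (near tightness). Then w(M) ≥ w(M*) − n, where M* is any maximum weight perfect matching and n = |V|. -/
open Finset
open scoped Classical

/-- `yz(e)` for an edge `e = {u,v}`: `y u + y v + ∑_{B ⊇ {u,v}} z B`. -/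
noncomputable def yzE {V : Type*} [Fintype V] (y : V → ℤ) (z : Finset V → ℤ) : Sym2 V → ℤ :=
  Sym2.lift ⟨fun u v => y u + y v + ∑ B ∈ Finset.univ.filter (fun B : Finset V => u ∈ B ∧ v ∈ B), z B,
    fun u v => by
      dsimp only
      rw [add_comm (y u) (y v)]
      congr 1
      apply Finset.sum_congr _ (fun _ _ => rfl)
      ext B
      simp [and_comm]⟩

/-- `M` is a matching of `G`: a set of edges of `G`, pairwise vertex-disjoint. -/
def IsMatchingF {V : Type*} (G : SimpleGraph V) (M : Finset (Sym2 V)) : Prop :=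
  (∀ e ∈ M, e ∈ G.edgeSet) ∧ ∀ e ∈ M, ∀ f ∈ M, e ≠ f → ∀ v : V, v ∈ e → v ∉ f

/-- A matching is perfect if every vertex is covered. -/
def IsPerfectF {V : Type*} (M : Finset (Sym2 V)) : Prop := ∀ v : V, ∃ e ∈ M, v ∈ e

/-- A vertex is free (unmatched) if it lies on no edge of `M`. -/
def isFreeV {V : Type*} (M : Finset (Sym2 V)) (v : V) : Prop := ∀ e ∈ M, v ∉ e

/-- The edges of `M` with both endpoints in `B` (i.e. `M ∩ E(B)`). -/
noncomputable def edgesWithin {V : Type*} (M : Finset (Sym2 V)) (B : Finset V) : Finset (Sym2 V) :=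
  M.filter (fun e => ∀ v ∈ e, v ∈ B)

/-- The dual objective `yz(V) = ∑ y(v) + ∑_B z(B)·⌊|B|/2⌋`. -/
noncomputable def dualObj {V : Type*} [Fintype V] (y : V → ℤ) (z : Finset V → ℤ) : ℤ :=
  (∑ v, y v) + ∑ B : Finset V, z B * ((B.card / 2 : ℕ) : ℤ)

/-!
Summing `yz` over a perfect matching `N` counts every `y v` once and every `z B` once per edge
of `N` inside `B`. Since a matching has at most `⌊|B|/2⌋` edges inside `B` and `z ≥ 0`, this
sum is at most the dual objective, with equality for `M` because all blossoms with `z B > 0`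
are full in `M`. Near tightness then gives `yz(V) ≤ w(M)`, and near domination gives
`w(M*) ≤ yz(M*) + 2|M*| ≤ yz(V) + n`.
-/

lemma edgesWithin_subset {V : Type*} (N : Finset (Sym2 V)) (B : Finset V) :
    edgesWithin N B ⊆ N :=
  filter_subset _ N

namespace IsMatchingF

variable {V : Type*} {G : SimpleGraph V} {N : Finset (Sym2 V)}

lemma not_isDiag (hN : IsMatchingF G N) {e : Sym2 V} (he : e ∈ N) : ¬ e.IsDiag :=
  G.not_isDiag_of_mem_edgeSet (hN.1 e he)

lemma subset (hN : IsMatchingF G N) {N' : Finset (Sym2 V)} (h : N' ⊆ N) : IsMatchingF G N' :=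
  ⟨fun e he => hN.1 e (h he), fun e he f hf => hN.2 e (h he) f (h hf)⟩

lemma pairwiseDisjoint_toFinset (hN : IsMatchingF G N) :
    (N : Set (Sym2 V)).PairwiseDisjoint Sym2.toFinset := by
  intro e he f hf hne
  rw [Function.onFun, Finset.disjoint_left]
  intro v hve hvf
  exact hN.2 e he f hf hne v (Sym2.mem_toFinset.mp hve) (Sym2.mem_toFinset.mp hvf)

lemma card_biUnion_toFinset (hN : IsMatchingF G N) :
    #(N.biUnion Sym2.toFinset) = 2 * #N := by
  rw [card_biUnion hN.pairwiseDisjoint_toFinset,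
    sum_congr rfl fun e he => Sym2.card_toFinset_of_not_isDiag e (hN.not_isDiag he),
    sum_const, smul_eq_mul, mul_comm]

lemma two_mul_card_edgesWithin_le (hN : IsMatchingF G N) (B : Finset V) :
    2 * #(edgesWithin N B) ≤ #B := by
  rw [← (hN.subset (edgesWithin_subset N B)).card_biUnion_toFinset]
  refine card_le_card fun v hv => ?_
  obtain ⟨e, he, hve⟩ := mem_biUnion.mp hv
  exact (mem_filter.mp he).2 v (Sym2.mem_toFinset.mp hve)

variable [Fintype V]

lemma biUnion_toFinset_eq_univ (hp : IsPerfectF N) : N.biUnion Sym2.toFinset = univ :=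
  eq_univ_of_forall fun v =>
    let ⟨e, he, hve⟩ := hp v
    mem_biUnion.mpr ⟨e, he, Sym2.mem_toFinset.mpr hve⟩

lemma two_mul_card_eq_card (hN : IsMatchingF G N) (hp : IsPerfectF N) :
    2 * #N = Fintype.card V := by
  rw [← hN.card_biUnion_toFinset, biUnion_toFinset_eq_univ hp, card_univ]

lemma sum_sum_toFinset_eq_sum {β : Type*} [AddCommMonoid β] (hN : IsMatchingF G N)
    (hp : IsPerfectF N) (f : V → β) :
    ∑ e ∈ N, ∑ v ∈ e.toFinset, f v = ∑ v, f v := by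
  rw [← sum_biUnion hN.pairwiseDisjoint_toFinset, biUnion_toFinset_eq_univ hp]

end IsMatchingF

section yzE

variable {V : Type*} [Fintype V] (y : V → ℤ) (z : Finset V → ℤ)

lemma yzE_eq_sum_toFinset {e : Sym2 V} (he : ¬ e.IsDiag) :
    yzE y z e = ∑ v ∈ e.toFinset, y v + ∑ B with ∀ v ∈ e, v ∈ B, z B := by
  induction e using Sym2.ind with
  | _ u v =>
    rw [Sym2.mk_isDiag_iff] at he
    simp [yzE, Sym2.toFinset_mk_eq, sum_pair he]

lemma sum_sum_superset_eq_sum_mul_card (N : Finset (Sym2 V)) :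
    ∑ e ∈ N, ∑ B with ∀ v ∈ e, v ∈ B, z B = ∑ B, z B * #(edgesWithin N B) := by
  rw [sum_comm' (t' := univ) (s' := edgesWithin N) (fun e B => by simp [edgesWithin])]
  simp [mul_comm]

variable {G : SimpleGraph V} {N : Finset (Sym2 V)}

lemma sum_yzE_eq (hN : IsMatchingF G N) (hp : IsPerfectF N) :
    ∑ e ∈ N, yzE y z e = ∑ v, y v + ∑ B, z B * #(edgesWithin N B) := by
  rw [sum_congr rfl fun e he => yzE_eq_sum_toFinset y z (hN.not_isDiag he), sum_add_distrib,
    hN.sum_sum_toFinset_eq_sum hp, sum_sum_superset_eq_sum_mul_card]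

lemma sum_yzE_le_dualObj (hN : IsMatchingF G N) (hp : IsPerfectF N) (hz : ∀ B, 0 ≤ z B) :
    ∑ e ∈ N, yzE y z e ≤ dualObj y z := by
  rw [sum_yzE_eq y z hN hp, dualObj]
  gcongr with B
  · exact hz B
  · exact_mod_cast (Nat.le_div_iff_mul_le two_pos).mpr
      (by linarith [hN.two_mul_card_edgesWithin_le B])

lemma sum_yzE_eq_dualObj (hN : IsMatchingF G N) (hp : IsPerfectF N) (hz : ∀ B, 0 ≤ z B)
    (hactive : ∀ B, 0 < z B → #(edgesWithin N B) = #B / 2) :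
    ∑ e ∈ N, yzE y z e = dualObj y z := by
  rw [sum_yzE_eq y z hN hp, dualObj]
  congr 1
  refine sum_congr rfl fun B _ => ?_
  rcases (hz B).eq_or_lt with h | h
  · simp [← h]
  · rw [hactive B h]

end yzE

theorem approx_of_relaxed_complementary_slackness_general {V : Type*} [Fintype V] (G : SimpleGraph V)
    (w : Sym2 V → ℤ) (y : V → ℤ) (z : Finset V → ℤ)
    (hsupp : ∀ B : Finset V, z B ≠ 0 → Odd B.card ∧ 3 ≤ B.card)
    (M : Finset (Sym2 V)) (hM : IsMatchingF G M) (hMp : IsPerfectF M)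
    (hz : ∀ B : Finset V, Odd B.card → 0 ≤ z B)
    (hactive : ∀ B : Finset V, 0 < z B → (edgesWithin M B).card = B.card / 2)
    (hneardom : ∀ e ∈ G.edgeSet, w e - 2 ≤ yzE y z e)
    (hneartight : ∀ e ∈ M, yzE y z e ≤ w e)
    (Mstar : Finset (Sym2 V)) (hMs : IsMatchingF G Mstar) (hMsp : IsPerfectF Mstar) :
    (∑ e ∈ Mstar, w e) - (Fintype.card V : ℤ) ≤ ∑ e ∈ M, w e := by
  have hz' : ∀ B, 0 ≤ z B := fun B => by
    by_cases h : z B = 0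
    · exact h.ge
    · exact hz B (hsupp B h).1
  have hcard : (Fintype.card V : ℤ) = ∑ _e ∈ Mstar, 2 := by
    rw [sum_const, nsmul_eq_mul, ← hMs.two_mul_card_eq_card hMsp]
    push_cast
    ring
  calc (∑ e ∈ Mstar, w e) - (Fintype.card V : ℤ)
      ≤ ∑ e ∈ Mstar, yzE y z e := by
        rw [hcard, ← sum_sub_distrib]
        exact sum_le_sum fun e he => hneardom e (hMs.1 e he)
    _ ≤ dualObj y z := sum_yzE_le_dualObj y z hMs hMsp hz'
    _ = ∑ e ∈ M, yzE y z e := (sum_yzE_eq_dualObj y z hM hMp hz' hactive).symm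
    _ ≤ ∑ e ∈ M, w e := sum_le_sum hneartight

/-- Lemma 2: relaxed complementary slackness implies the perfect matching `M`
is within `n = |V|` of the maximum weight perfect matching `Mstar`. -/
theorem approx_of_relaxed_complementary_slackness {V : Type*} [Fintype V] (G : SimpleGraph V)
    (w : Sym2 V → ℤ) (y : V → ℤ) (z : Finset V → ℤ)
    (hsupp : ∀ B : Finset V, z B ≠ 0 → Odd B.card ∧ 3 ≤ B.card)
    (M : Finset (Sym2 V)) (hM : IsMatchingF G M) (hMp : IsPerfectF M)
    (hz : ∀ B : Finset V, Odd B.card → 0 ≤ z B)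
    (hactive : ∀ B : Finset V, 0 < z B → (edgesWithin M B).card = B.card / 2)
    (hneardom : ∀ e ∈ G.edgeSet, w e - 2 ≤ yzE y z e)
    (hneartight : ∀ e ∈ M, yzE y z e ≤ w e)
    (Mstar : Finset (Sym2 V)) (hMs : IsMatchingF G Mstar) (hMsp : IsPerfectF Mstar)
    (hmax : ∀ M'' : Finset (Sym2 V), IsMatchingF G M'' → IsPerfectF M'' →
      ∑ e ∈ M'', w e ≤ ∑ e ∈ Mstar, w e) :
    (∑ e ∈ Mstar, w e) - (Fintype.card V : ℤ) ≤ ∑ e ∈ M, w e :=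
  approx_of_relaxed_complementary_slackness_general G w y z hsupp M hM hMp hz hactive hneardom
    hneartight Mstar hMs hMsp
end

section
/- (Lemma 9) Suppose z(B) ≥ 0 for every odd set B, every edge e = (u,v) satisfies w(e) ≤ Σ_{B ⊇ {u,v}} z(B), and M' is a perfect matching of G satisfying w(M') ≥ Σ_B z(B)·⌊|B|/2⌋ − 8n. Then for every (not necessarily perfect) matching M'' of G, w(M'') ≤ w(M') + 8n. -/
open Finset
open scoped Classical

/-!
Weak duality for the odd-set relaxation of matching. Since every edge is dominated by the odd
sets containing it, `w(M'') ≤ ∑_B z(B) · |M'' ∩ E(B)|`, and a matching has at most `⌊|B|/2⌋`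
edges inside `B`, so `w(M'') ≤ ∑_B z(B) · ⌊|B|/2⌋ ≤ w(M') + 8n`.
-/

section

variable {V : Type*}

theorem IsMatchingF.card_edgesWithin_le {G : SimpleGraph V} {M : Finset (Sym2 V)}
    (hM : IsMatchingF G M) (B : Finset V) : #(edgesWithin M B) ≤ #B / 2 := by
  rw [Nat.le_div_iff_mul_le two_pos]
  have hdisj : ((edgesWithin M B : Finset (Sym2 V)) : Set (Sym2 V)).PairwiseDisjoint
      Sym2.toFinset := by
    intro e he f hf hef
    refine Finset.disjoint_left.2 fun v hve hvf => ?_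
    exact hM.2 e (mem_filter.1 he).1 f (mem_filter.1 hf).1 hef v
      (Sym2.mem_toFinset.1 hve) (Sym2.mem_toFinset.1 hvf)
  calc #(edgesWithin M B) * 2 = ∑ e ∈ edgesWithin M B, #e.toFinset := by
        rw [← smul_eq_mul, ← sum_const]
        exact sum_congr rfl fun e he => (Sym2.card_toFinset_of_not_isDiag e
          (G.not_isDiag_of_mem_edgeSet (hM.1 e (mem_filter.1 he).1))).symm
    _ = #((edgesWithin M B).biUnion Sym2.toFinset) := (card_biUnion hdisj).symm
    _ ≤ #B := card_le_card fun v hv => by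
        obtain ⟨e, he, hve⟩ := mem_biUnion.1 hv
        exact (mem_filter.1 he).2 v (Sym2.mem_toFinset.1 hve)

variable [Fintype V]

theorem yzE_zero (z : Finset V → ℤ) (e : Sym2 V) :
    yzE (fun _ => 0) z e = ∑ B ∈ univ.filter (fun B : Finset V => ∀ v ∈ e, v ∈ B), z B := by
  induction e using Sym2.ind with
  | _ u v => simp only [yzE, Sym2.lift_mk, zero_add, Sym2.mem_iff, forall_eq_or_imp, forall_eq]

theorem sum_yzE_zero (z : Finset V → ℤ) (M : Finset (Sym2 V)) :
    ∑ e ∈ M, yzE (fun _ => 0) z e = ∑ B : Finset V, z B * #(edgesWithin M B) := by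
  simp_rw [yzE_zero, sum_filter]
  rw [sum_comm]
  refine sum_congr rfl fun B _ => ?_
  rw [← sum_filter, sum_const, nsmul_eq_mul, mul_comm, edgesWithin]
  congr

theorem IsMatchingF.sum_le_sum_mul_card_div_two {G : SimpleGraph V} {M : Finset (Sym2 V)}
    (hM : IsMatchingF G M) {w : Sym2 V → ℤ} {z : Finset V → ℤ} (hz : ∀ B, 0 ≤ z B)
    (hdom : ∀ e ∈ G.edgeSet, w e ≤ yzE (fun _ => 0) z e) :
    ∑ e ∈ M, w e ≤ ∑ B : Finset V, z B * ((#B / 2 : ℕ) : ℤ) :=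
  calc ∑ e ∈ M, w e ≤ ∑ e ∈ M, yzE (fun _ => 0) z e := sum_le_sum fun e he => hdom e (hM.1 e he)
    _ = ∑ B : Finset V, z B * #(edgesWithin M B) := sum_yzE_zero z M
    _ ≤ ∑ B : Finset V, z B * ((#B / 2 : ℕ) : ℤ) := sum_le_sum fun B _ =>
        mul_le_mul_of_nonneg_left (by exact_mod_cast hM.card_edgesWithin_le B) (hz B)

end

theorem matching_weight_le_perfect_add_general {V : Type*} [Fintype V] (G : SimpleGraph V)
    (w : Sym2 V → ℤ) (z : Finset V → ℤ) (n : ℤ)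
    (hsupp : ∀ B : Finset V, z B ≠ 0 → Odd B.card ∧ 3 ≤ B.card)
    (hz : ∀ B : Finset V, Odd B.card → 0 ≤ z B)
    (hdom : ∀ e ∈ G.edgeSet, w e ≤ yzE (fun _ => 0) z e)
    (M' : Finset (Sym2 V))
    (hM'w : (∑ B : Finset V, z B * ((B.card / 2 : ℕ) : ℤ)) - 8 * n ≤ ∑ e ∈ M', w e) :
    ∀ M'' : Finset (Sym2 V), IsMatchingF G M'' →
      ∑ e ∈ M'', w e ≤ (∑ e ∈ M', w e) + 8 * n := by
  intro M'' hM''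
  have hz_nonneg : ∀ B, 0 ≤ z B := fun B => by
    by_cases hzB : z B = 0
    · exact hzB.ge
    · exact hz B (hsupp B hzB).1
  have hweak := hM''.sum_le_sum_mul_card_div_two hz_nonneg hdom
  linarith

/-- Lemma 9: if in addition `M'` is a perfect matching with
`w(M') ≥ ∑_B z(B)·⌊|B|/2⌋ - 8n`, then every matching `M''` satisfies
`w(M'') ≤ w(M') + 8n`. -/
theorem matching_weight_le_perfect_add {V : Type*} [Fintype V] (G : SimpleGraph V)
    (w : Sym2 V → ℤ) (z : Finset V → ℤ) (n : ℤ)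
    (hVcard : (Fintype.card V : ℤ) ≤ 2 * n)
    (hsupp : ∀ B : Finset V, z B ≠ 0 → Odd B.card ∧ 3 ≤ B.card)
    (hz : ∀ B : Finset V, Odd B.card → 0 ≤ z B)
    (hdom : ∀ e ∈ G.edgeSet, w e ≤ yzE (fun _ => 0) z e)
    (M' : Finset (Sym2 V)) (hM' : IsMatchingF G M') (hM'p : IsPerfectF M')
    (hM'w : (∑ B : Finset V, z B * ((B.card / 2 : ℕ) : ℤ)) - 8 * n ≤ ∑ e ∈ M', w e) :
    ∀ M'' : Finset (Sym2 V), IsMatchingF G M'' →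
      ∑ e ∈ M'', w e ≤ (∑ e ∈ M', w e) + 8 * n :=
  matching_weight_le_perfect_add_general G w z n hsupp hz hdom M' hM'w
end

section
/- (Lemma 6) Let w' : E → ℤ, y' : V → ℤ, z' : Finset V → ℤ be the weights and duals from the previous scale, satisfying near domination: y'z'(e) ≥ w'(e) − 2 for every edge e. Define new weights and duals by w(e) = 2(w'(e) + b(e)) where b(e) ∈ {0,1}, y(u) = 2y'(u) + 3 for every vertex u, and z(B) = 2z'(B) for every set B. Then: (i) w(e) ≤ yz(e) for every edge e; and (ii) for every edge e with y'z'(e) ≤ w'(e) (in particular old matched and blossom edges satisfying near tightness), w(e) ≥ yz(e) − 6. -/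
open Finset
open scoped Classical

theorem yzE_eq_mul_add {V : Type*} [Fintype V] {y y' : V → ℤ} {z z' : Finset V → ℤ} (a c : ℤ)
    (hy : ∀ u, y u = a * y' u + c) (hz : ∀ B, z B = a * z' B) (e : Sym2 V) :
    yzE y z e = a * yzE y' z' e + 2 * c := by
  induction e using Sym2.ind with
  | _ u v =>
    simp only [yzE, Sym2.lift_mk, hy, hz, ← Finset.mul_sum]
    ring

/-- Lemma 6: rescaling duals. With `w(e) = 2(w'(e) + b(e))`, `b(e) ∈ {0,1}`,
`y(u) = 2y'(u) + 3`, `z(B) = 2z'(B)`, near domination for the old duals gives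
`w(e) ≤ yz(e)` for all edges, and any edge with `y'z'(e) ≤ w'(e)` satisfies
`w(e) ≥ yz(e) - 6`. -/
theorem rescaling_duals {V : Type*} [Fintype V] (G : SimpleGraph V)
    (w w' b : Sym2 V → ℤ) (y y' : V → ℤ) (z z' : Finset V → ℤ)
    (hneardom : ∀ e ∈ G.edgeSet, w' e - 2 ≤ yzE y' z' e)
    (hb : ∀ e ∈ G.edgeSet, b e = 0 ∨ b e = 1)
    (hw : ∀ e : Sym2 V, w e = 2 * (w' e + b e))
    (hy : ∀ u : V, y u = 2 * y' u + 3)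
    (hz : ∀ B : Finset V, z B = 2 * z' B) :
    (∀ e ∈ G.edgeSet, w e ≤ yzE y z e) ∧
    (∀ e ∈ G.edgeSet, yzE y' z' e ≤ w' e → yzE y z e - 6 ≤ w e) := by
  have hyz (e : Sym2 V) : yzE y z e = 2 * yzE y' z' e + 6 := yzE_eq_mul_add 2 3 hy hz e
  have hb_bounds {e} (he : e ∈ G.edgeSet) : 0 ≤ b e ∧ b e ≤ 1 := by
    rcases hb e he with h | h <;> omega
  refine ⟨fun e he => ?_, fun e he htight => ?_⟩
  · linarith [hw e, hyz e, hneardom e he, hb_bounds he]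
  · linarith [hw e, hyz e, hb_bounds he]
end

section
/- (Liquidation preserves domination) Let B₀ be an odd set with z(B₀) ≥ 0 and z(B₀) even. Define new duals by y₂(u) = y(u) + z(B₀)/2 for u ∈ B₀ and y₂(u) = y(u) otherwise, z₂(B₀) = 0 and z₂(B) = z(B) for B ≠ B₀. Then for every edge e: if e has exactly one endpoint in B₀ then y₂z₂(e) = yz(e) + z(B₀)/2, and otherwise y₂z₂(e) = yz(e). Consequently, if yz(e) ≥ w(e) for every edge e, then y₂z₂(e) ≥ w(e) for every edge e. -/
open Finset
open scoped Classical

theorem sum_add_ite_mem_eq_of_eq_zero_of_eq_off {α M : Type*} [AddCommMonoid M] {f g : α → M}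
    {a : α} (hga : g a = 0) (hg : ∀ b, b ≠ a → g b = f b) (s : Finset α) :
    ∑ b ∈ s, g b + (if a ∈ s then f a else 0) = ∑ b ∈ s, f b := by
  have hsplit : ∀ b, f b = g b + if b = a then f a else 0 := by
    intro b
    by_cases hb : b = a
    · simp [hb, hga]
    · simp [hb, hg b hb]
  rw [sum_congr rfl fun b _ => hsplit b, sum_add_distrib, sum_ite_eq']

/-! Every vertex of `B₀` gains `c = z(B₀)/2` while an edge inside `B₀` loses `z(B₀) = 2c`, so an
edge gains `c` if it leaves `B₀` and nothing otherwise; since `c ≥ 0`, domination survives. -/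

section Liquidation

variable {V : Type*} [Fintype V] {y y₂ : V → ℤ} {z z₂ : Finset V → ℤ} {B₀ : Finset V} {c : ℤ}

theorem yzE_mk (y : V → ℤ) (z : Finset V → ℤ) (u v : V) :
    yzE y z s(u, v) = y u + y v + ∑ B ∈ univ.filter (fun B : Finset V => u ∈ B ∧ v ∈ B), z B :=
  rfl

theorem yzE_liquidate (hy₂ : ∀ u, y₂ u = if u ∈ B₀ then y u + c else y u) (hz₂B₀ : z₂ B₀ = 0)
    (hz₂ : ∀ B, B ≠ B₀ → z₂ B = z B) (u v : V) :
    yzE y₂ z₂ s(u, v) + (if u ∈ B₀ ∧ v ∈ B₀ then z B₀ else 0) =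
      yzE y z s(u, v) + (if u ∈ B₀ then c else 0) + (if v ∈ B₀ then c else 0) := by
  have hsum := sum_add_ite_mem_eq_of_eq_zero_of_eq_off hz₂B₀ hz₂
    (univ.filter fun B : Finset V => u ∈ B ∧ v ∈ B)
  simp only [mem_filter, mem_univ, true_and] at hsum
  rw [yzE_mk, yzE_mk, hy₂ u, hy₂ v, ← hsum]
  split_ifs <;> ring

theorem yzE_liquidate_of_xor (hy₂ : ∀ u, y₂ u = if u ∈ B₀ then y u + c else y u)
    (hz₂B₀ : z₂ B₀ = 0) (hz₂ : ∀ B, B ≠ B₀ → z₂ B = z B) {u v : V}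
    (huv : Xor (u ∈ B₀) (v ∈ B₀)) : yzE y₂ z₂ s(u, v) = yzE y z s(u, v) + c := by
  have h := yzE_liquidate hy₂ hz₂B₀ hz₂ u v
  rcases huv with ⟨hu, hv⟩ | ⟨hv, hu⟩ <;> simp_all

theorem yzE_liquidate_of_not_xor (hy₂ : ∀ u, y₂ u = if u ∈ B₀ then y u + c else y u)
    (hz₂B₀ : z₂ B₀ = 0) (hz₂ : ∀ B, B ≠ B₀ → z₂ B = z B) (hc : 2 * c = z B₀) {u v : V}
    (huv : ¬Xor (u ∈ B₀) (v ∈ B₀)) : yzE y₂ z₂ s(u, v) = yzE y z s(u, v) := by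
  have h := yzE_liquidate hy₂ hz₂B₀ hz₂ u v
  by_cases hu : u ∈ B₀ <;> by_cases hv : v ∈ B₀
  · simp only [hu, hv, and_self, if_true] at h
    linarith
  all_goals simp_all [Xor]

theorem yzE_le_yzE_liquidate (hy₂ : ∀ u, y₂ u = if u ∈ B₀ then y u + c else y u)
    (hz₂B₀ : z₂ B₀ = 0) (hz₂ : ∀ B, B ≠ B₀ → z₂ B = z B) (hc : 2 * c = z B₀) (hc₀ : 0 ≤ c)
    (e : Sym2 V) : yzE y z e ≤ yzE y₂ z₂ e := by
  induction e with
  | h u v =>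
    by_cases huv : Xor (u ∈ B₀) (v ∈ B₀)
    · rw [yzE_liquidate_of_xor hy₂ hz₂B₀ hz₂ huv]
      exact le_add_of_nonneg_right hc₀
    · rw [yzE_liquidate_of_not_xor hy₂ hz₂B₀ hz₂ hc huv]

end Liquidation

theorem liquidation_preserves_domination_general {V : Type*} [Fintype V] (G : SimpleGraph V)
    (w : Sym2 V → ℤ) (y y₂ : V → ℤ) (z z₂ : Finset V → ℤ)
    (B₀ : Finset V) (hnn : 0 ≤ z B₀) (heven : Even (z B₀))
    (hy₂ : ∀ u : V, y₂ u = if u ∈ B₀ then y u + z B₀ / 2 else y u)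
    (hz₂B₀ : z₂ B₀ = 0) (hz₂ : ∀ B : Finset V, B ≠ B₀ → z₂ B = z B) :
    (∀ u v : V, G.Adj u v →
      (Xor' (u ∈ B₀) (v ∈ B₀) → yzE y₂ z₂ s(u,v) = yzE y z s(u,v) + z B₀ / 2) ∧
      (¬ Xor' (u ∈ B₀) (v ∈ B₀) → yzE y₂ z₂ s(u,v) = yzE y z s(u,v))) ∧
    ((∀ e ∈ G.edgeSet, w e ≤ yzE y z e) → ∀ e ∈ G.edgeSet, w e ≤ yzE y₂ z₂ e) := by
  have hc : 2 * (z B₀ / 2) = z B₀ := Int.two_mul_ediv_two_of_even heven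
  have hc₀ : 0 ≤ z B₀ / 2 := Int.ediv_nonneg hnn zero_le_two
  refine ⟨fun u v _ => ⟨yzE_liquidate_of_xor hy₂ hz₂B₀ hz₂,
    yzE_liquidate_of_not_xor hy₂ hz₂B₀ hz₂ hc⟩,
    fun hdom e he => (hdom e he).trans (yzE_le_yzE_liquidate hy₂ hz₂B₀ hz₂ hc hc₀ e)⟩

/-- liquidating the blossom `B₀` (moving `z(B₀)/2` onto the `y`-values of
its vertices) increases `yz(e)` by `z(B₀)/2` for edges with exactly one endpoint in `B₀`
and leaves it unchanged otherwise; consequently domination is preserved. -/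
theorem liquidation_preserves_domination {V : Type*} [Fintype V] (G : SimpleGraph V)
    (w : Sym2 V → ℤ) (y y₂ : V → ℤ) (z z₂ : Finset V → ℤ)
    (B₀ : Finset V) (hodd : Odd B₀.card) (hnn : 0 ≤ z B₀) (heven : Even (z B₀))
    (hy₂ : ∀ u : V, y₂ u = if u ∈ B₀ then y u + z B₀ / 2 else y u)
    (hz₂B₀ : z₂ B₀ = 0) (hz₂ : ∀ B : Finset V, B ≠ B₀ → z₂ B = z B) :
    (∀ u v : V, G.Adj u v →
      (Xor' (u ∈ B₀) (v ∈ B₀) → yzE y₂ z₂ s(u,v) = yzE y z s(u,v) + z B₀ / 2) ∧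
      (¬ Xor' (u ∈ B₀) (v ∈ B₀) → yzE y₂ z₂ s(u,v) = yzE y z s(u,v))) ∧
    ((∀ e ∈ G.edgeSet, w e ≤ yzE y z e) → ∀ e ∈ G.edgeSet, w e ≤ yzE y₂ z₂ e) :=
  liquidation_preserves_domination_general G w y y₂ z z₂ B₀ hnn heven hy₂ hz₂B₀ hz₂
end

section
/- (Lemma 3) Let M be a matching of G and F a set of free vertices. Call an edge e eligible (with respect to M) if either e ∉ M and yz(e) = w(e) − 2, or e ∈ M and yz(e) = w(e). Let Ψ be a maximal set of vertex-disjoint augmenting paths in the eligible subgraph, each with at least one endpoint in F, and let M₂ = M ⊕ ⋃_{P∈Ψ} P be the matching obtained by augmenting along all paths of Ψ. Then the subgraph of edges eligible with respect to M₂ contains no augmenting path for M₂ with an endpoint in F. -/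
open Finset
open scoped Classical

/-- An edge is *eligible* (Criterion 2) w.r.t. the matching `M` if it is unmatched with
`yz(e) = w(e) - 2`, or matched with `yz(e) = w(e)`. -/
def eligible {V : Type*} [Fintype V] (w : Sym2 V → ℤ) (y : V → ℤ) (z : Finset V → ℤ)
    (M : Finset (Sym2 V)) (e : Sym2 V) : Prop :=
  (e ∉ M ∧ yzE y z e = w e - 2) ∨ (e ∈ M ∧ yzE y z e = w e)

/-- `p 0, p 1, …, p L` is an augmenting path for the matching `M` inside the subgraph of
edges satisfying `elig`: it is a simple path of `G` with an odd number `L` of edges, all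
eligible, alternating (edge `i` is matched iff `i` is odd), whose two endpoints are free. -/
def IsAugPath {V : Type*} (G : SimpleGraph V) (elig : Sym2 V → Prop)
    (M : Finset (Sym2 V)) (p : ℕ → V) (L : ℕ) : Prop :=
  Odd L ∧
  (∀ i j, i ≤ L → j ≤ L → p i = p j → i = j) ∧
  (∀ i, i < L → G.Adj (p i) (p (i + 1)) ∧ elig s(p i, p (i + 1))) ∧
  (∀ i, i < L → (s(p i, p (i + 1)) ∈ M ↔ Odd i)) ∧
  isFreeV M (p 0) ∧ isFreeV M (p L)

/-- The set of edges of the path `(p, L)`. -/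
noncomputable def pathEdges {V : Type*} (p : ℕ → V) (L : ℕ) : Finset (Sym2 V) :=
  (Finset.range L).image (fun i => s(p i, p (i + 1)))

/-! An eligible augmenting path `q` for `M₂` cannot meet a path `P ∈ Ψ`. A common vertex `v` is
covered in `M₂` by the unmatched edge of `P` at `v`, so it is an inner vertex of `q`, and the
matched edge `f` of `q` at `v` satisfies `yz(f) = w(f)`. If `f` lies on a path of `Ψ` it entered
`M₂` by augmentation and was eligible for `M` as an unmatched edge, so `yz(f) = w(f) - 2`;
otherwise `f ∈ M` covers a vertex of `P`, whose only `M`-edge lies on `P`. So `q` avoids all of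
`Ψ`, its edges and endpoints look the same in `M` and `M₂`, and it is an eligible augmenting path
for `M` contradicting the maximality of `Ψ`. -/

open scoped symmDiff

section

variable {V : Type*}

theorem mem_pathEdges {p : ℕ → V} {L : ℕ} {e : Sym2 V} :
    e ∈ pathEdges p L ↔ ∃ c < L, s(p c, p (c + 1)) = e := by
  simp [pathEdges]

theorem apply_mem_pathEdge (p : ℕ → V) {b c : ℕ} (h : b = c ∨ b = c + 1) :
    p b ∈ s(p c, p (c + 1)) := by
  rcases h with rfl | rfl <;> simp

namespace IsAugPath

variable {G : SimpleGraph V} {elig : Sym2 V → Prop} {M : Finset (Sym2 V)} {p : ℕ → V} {L b : ℕ}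

theorem exists_unmatched_edge (hp : IsAugPath G elig M p L) (hb : b ≤ L) :
    ∃ e ∈ pathEdges p L, e ∉ M ∧ p b ∈ e := by
  have hL := Nat.odd_iff.mp hp.1
  obtain ⟨k, hk⟩ := Nat.even_or_odd' b
  have hkL : 2 * k < L := by omega
  refine ⟨_, mem_pathEdges.mpr ⟨2 * k, hkL, rfl⟩, ?_, apply_mem_pathEdge p (by omega)⟩
  rw [hp.2.2.2.1 _ hkL]
  simp

theorem exists_matched_edge (hp : IsAugPath G elig M p L) (h0 : 0 < b) (hb : b < L) :
    ∃ e ∈ pathEdges p L, e ∈ M ∧ p b ∈ e := by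
  obtain ⟨c, hcL, hc, hbc⟩ : ∃ c < L, Odd c ∧ (b = c ∨ b = c + 1) := by
    obtain ⟨k, rfl | rfl⟩ := Nat.even_or_odd' b
    · obtain ⟨k, rfl⟩ := Nat.exists_eq_succ_of_ne_zero (by omega : k ≠ 0)
      exact ⟨2 * k + 1, by omega, odd_two_mul_add_one k, Or.inr (by omega)⟩
    · exact ⟨2 * k + 1, hb, odd_two_mul_add_one k, Or.inl rfl⟩
  exact ⟨_, mem_pathEdges.mpr ⟨c, hcL, rfl⟩, (hp.2.2.2.1 c hcL).mpr hc, apply_mem_pathEdge p hbc⟩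

theorem mem_pathEdges_of_mem (hM : IsMatchingF G M) (hp : IsAugPath G elig M p L) (hb : b ≤ L)
    {e : Sym2 V} (he : e ∈ M) (hbe : p b ∈ e) : e ∈ pathEdges p L := by
  rcases Nat.eq_zero_or_pos b with rfl | hb0
  · exact absurd hbe (hp.2.2.2.2.1 e he)
  rcases hb.lt_or_eq with hbL | rfl
  · obtain ⟨f, hf, hfM, hbf⟩ := hp.exists_matched_edge hb0 hbL
    by_cases hef : e = f
    · exact hef ▸ hf
    · exact absurd hbf (hM.2 e he f hfM hef _ hbe)
  · exact absurd hbe (hp.2.2.2.2.2 e he)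

variable [Fintype V] {w : Sym2 V → ℤ} {y : V → ℤ} {z : Finset V → ℤ} {A : Finset (Sym2 V)}
  {q : ℕ → V}

theorem apply_ne_of_symmDiff
    (hq : IsAugPath G (eligible w y z (M ∆ A)) (M ∆ A) q L)
    (hA : ∀ e ∈ A, eligible w y z M e) {v : V} (hvA : ∃ e ∈ A, e ∉ M ∧ v ∈ e)
    (hvM : ∀ e ∈ M, v ∈ e → e ∈ A) {a : ℕ} (ha : a ≤ L) : q a ≠ v := by
  rintro rfl
  obtain ⟨e, heA, heM, hae⟩ := hvA
  have he : e ∈ M ∆ A := Finset.mem_symmDiff.mpr (Or.inr ⟨heA, heM⟩)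
  rcases Nat.eq_zero_or_pos a with rfl | ha0
  · exact hq.2.2.2.2.1 e he hae
  rcases ha.lt_or_eq with haL | rfl
  · obtain ⟨f, hf, hfM₂, haf⟩ := hq.exists_matched_edge ha0 haL
    obtain ⟨c, hc, rfl⟩ := mem_pathEdges.mp hf
    have hfA : s(q c, q (c + 1)) ∈ A ∧ s(q c, q (c + 1)) ∉ M := by
      rcases Finset.mem_symmDiff.mp hfM₂ with ⟨hfM, hfA⟩ | hfA
      · exact absurd (hvM _ hfM haf) hfA
      · exact hfA
    -- tight for `M₂` as a matched edge, but eligible for `M` only as an unmatched one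
    have hyz₂ : yzE y z s(q c, q (c + 1)) = w s(q c, q (c + 1)) := by
      rcases (hq.2.2.1 c hc).2 with ⟨hfM₂', -⟩ | ⟨-, h⟩
      · exact absurd hfM₂ hfM₂'
      · exact h
    rcases hA _ hfA.1 with ⟨-, h⟩ | ⟨hfM, -⟩
    · omega
    · exact hfA.2 hfM
  · exact hq.2.2.2.2.2 e he hae

theorem of_symmDiff (hq : IsAugPath G (eligible w y z (M ∆ A)) (M ∆ A) q L)
    (hqA : ∀ a ≤ L, ∀ e ∈ A, q a ∉ e) : IsAugPath G (eligible w y z M) M q L := by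
  obtain ⟨hL, hinj, hadj, halt, h0, hLfree⟩ := hq
  have hmem : ∀ e, e ∉ A → (e ∈ M ∆ A ↔ e ∈ M) := fun e he => by
    simp [Finset.mem_symmDiff, he]
  have hedge : ∀ c < L, (s(q c, q (c + 1)) ∈ M ∆ A ↔ s(q c, q (c + 1)) ∈ M) := fun c hc =>
    hmem _ fun he => hqA c hc.le _ he (Sym2.mem_mk_left _ _)
  have hfree : ∀ a ≤ L, isFreeV (M ∆ A) (q a) → isFreeV M (q a) := fun a ha h e he hae =>
    h e ((hmem e fun heA => hqA a ha e heA hae).mpr he) hae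
  refine ⟨hL, hinj, fun c hc => ⟨(hadj c hc).1, ?_⟩,
    fun c hc => (hedge c hc).symm.trans (halt c hc), hfree 0 (Nat.zero_le _) h0, hfree L le_rfl hLfree⟩
  have := (hadj c hc).2
  unfold eligible at this ⊢
  rwa [hedge c hc] at this

end IsAugPath

end

theorem no_eligible_augmenting_path_after_augment_general {V : Type*} [Fintype V]
    (G : SimpleGraph V) (w : Sym2 V → ℤ) (y : V → ℤ) (z : Finset V → ℤ)
    (M : Finset (Sym2 V)) (hM : IsMatchingF G M)
    (F : Finset V)
    (k : ℕ) (P : Fin k → (ℕ → V) × ℕ)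
    (hpaths : ∀ i : Fin k, IsAugPath G (eligible w y z M) M (P i).1 (P i).2)
    (hmax : ∀ (q : ℕ → V) (L : ℕ), IsAugPath G (eligible w y z M) M q L →
      (q 0 ∈ F ∨ q L ∈ F) → ∃ i : Fin k, ∃ a ≤ L, ∃ b ≤ (P i).2, q a = (P i).1 b)
    (A M₂ : Finset (Sym2 V))
    (hA : A = Finset.univ.biUnion (fun i : Fin k => pathEdges (P i).1 (P i).2))
    (hM₂ : M₂ = (M ∪ A) \ (M ∩ A)) :
    ¬ ∃ (q : ℕ → V) (L : ℕ),
        IsAugPath G (eligible w y z M₂) M₂ q L ∧ (q 0 ∈ F ∨ q L ∈ F) := by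
  rintro ⟨q, L, hq, hqF⟩
  rw [hM₂, ← Finset.sup_eq_union, ← Finset.inf_eq_inter, ← symmDiff_eq_sup_sdiff_inf] at hq
  have hPA : ∀ i, pathEdges (P i).1 (P i).2 ⊆ A := fun i =>
    hA ▸ Finset.subset_biUnion_of_mem (fun j => pathEdges (P j).1 (P j).2) (Finset.mem_univ i)
  have hAelig : ∀ e ∈ A, eligible w y z M e := by
    simp only [hA, Finset.mem_biUnion, Finset.mem_univ, true_and, mem_pathEdges]
    rintro _ ⟨i, c, hc, rfl⟩
    exact ((hpaths i).2.2.1 c hc).2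
  have hqP : ∀ i, ∀ b ≤ (P i).2, ∀ a ≤ L, q a ≠ (P i).1 b := fun i b hb a ha => by
    obtain ⟨e, he, heM, hbe⟩ := (hpaths i).exists_unmatched_edge hb
    exact hq.apply_ne_of_symmDiff hAelig ⟨e, hPA i he, heM, hbe⟩
      (fun f hf hbf => hPA i ((hpaths i).mem_pathEdges_of_mem hM hb hf hbf)) ha
  have hqA : ∀ a ≤ L, ∀ e ∈ A, q a ∉ e := by
    simp only [hA, Finset.mem_biUnion, Finset.mem_univ, true_and, mem_pathEdges]
    rintro a ha _ ⟨i, c, hc, rfl⟩ hae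
    rcases Sym2.mem_iff.mp hae with h | h
    · exact hqP i c hc.le a ha h
    · exact hqP i (c + 1) hc a ha h
  obtain ⟨i, a, ha, b, hb, h⟩ := hmax q L (hq.of_symmDiff hqA) hqF
  exact hqP i b hb a ha h

/-- Lemma 3: let `Ψ = {P 0, …, P (k-1)}` be a maximal collection of
vertex-disjoint augmenting paths in the eligible subgraph, each with an endpoint in the
set `F` of free vertices, and let `M₂ = M ⊕ ⋃_{P ∈ Ψ} P`. Then the subgraph of edges
eligible w.r.t. `M₂` contains no augmenting path for `M₂` with an endpoint in `F`. -/
theorem no_eligible_augmenting_path_after_augment {V : Type*} [Fintype V]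
    (G : SimpleGraph V) (w : Sym2 V → ℤ) (y : V → ℤ) (z : Finset V → ℤ)
    (M : Finset (Sym2 V)) (hM : IsMatchingF G M)
    (F : Finset V) (hF : ∀ v ∈ F, isFreeV M v)
    (k : ℕ) (P : Fin k → (ℕ → V) × ℕ)
    (hpaths : ∀ i : Fin k, IsAugPath G (eligible w y z M) M (P i).1 (P i).2)
    (hends : ∀ i : Fin k, (P i).1 0 ∈ F ∨ (P i).1 (P i).2 ∈ F)
    (hdisj : ∀ i j : Fin k, i ≠ j →
      ∀ a ≤ (P i).2, ∀ b ≤ (P j).2, (P i).1 a ≠ (P j).1 b)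
    (hmax : ∀ (q : ℕ → V) (L : ℕ), IsAugPath G (eligible w y z M) M q L →
      (q 0 ∈ F ∨ q L ∈ F) → ∃ i : Fin k, ∃ a ≤ L, ∃ b ≤ (P i).2, q a = (P i).1 b)
    (A M₂ : Finset (Sym2 V))
    (hA : A = Finset.univ.biUnion (fun i : Fin k => pathEdges (P i).1 (P i).2))
    (hM₂ : M₂ = (M ∪ A) \ (M ∩ A)) :
    ¬ ∃ (q : ℕ → V) (L : ℕ),
        IsAugPath G (eligible w y z M₂) M₂ q L ∧ (q 0 ∈ F ∨ q L ∈ F) :=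
  no_eligible_augmenting_path_after_augment_general G w y z M hM F k P hpaths hmax A M₂ hA hM₂
end

section
/- (Dual objective identity under tightness) Let M be a matching of G such that yz(e) = w(e) for every e ∈ M, and such that whenever z(B) ≠ 0, M contains exactly ⌊|B|/2⌋ edges with both endpoints in B. Then Σ_{v∈V} y(v) + Σ_B z(B)·⌊|B|/2⌋ = w(M) + Σ_{u not matched by M} y(u); that is, the dual objective yz(V) equals the weight of M plus the sum of y-values of free vertices. -/
open Finset
open scoped Classical

/-! Each edge of `M` contributes its tight value `yz(e) = w(e)`, i.e. the `y`-values of its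
endpoints plus the `z`-values of the sets containing it. Summed over `M`, the endpoint terms give
the `y`-values of the matched vertices (the edges are disjoint), and the set terms give
`∑_B z(B) · |M ∩ E(B)|` by double counting, which is `∑_B z(B) ⌊|B|/2⌋` since `z(B) ≠ 0` forces
`|M ∩ E(B)| = ⌊|B|/2⌋`. Adding the free vertices completes `∑_v y(v)`. -/

lemma yzE_eq_of_not_isDiag {V : Type*} [Fintype V] (y : V → ℤ) (z : Finset V → ℤ) {e : Sym2 V}
    (he : ¬ e.IsDiag) :
    yzE y z e = ∑ v ∈ e.toFinset, y v + ∑ B with ∀ v ∈ e, v ∈ B, z B := by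
  induction e using Sym2.inductionOn with
  | hf u v =>
    have huv : u ≠ v := by simpa using he
    simp [yzE, Sym2.toFinset_mk_eq, sum_pair huv]

lemma sum_mul_card_edgesWithin {V R : Type*} [Fintype V] [NonAssocSemiring R]
    (M : Finset (Sym2 V)) (z : Finset V → R) :
    ∑ B, z B * #(edgesWithin M B) = ∑ e ∈ M, ∑ B with ∀ v ∈ e, v ∈ B, z B := by
  have hcount : ∀ B, z B * #(edgesWithin M B) = ∑ e ∈ edgesWithin M B, z B := fun B => by
    rw [sum_const, nsmul_eq_mul']
  rw [sum_congr rfl fun B _ => hcount B]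
  simp only [edgesWithin, sum_filter]
  convert Finset.sum_comm

lemma sum_sum_toFinset_eq_sum_not_isFreeV {V β : Type*} [Fintype V] [AddCommMonoid β]
    {M : Finset (Sym2 V)} (hdisj : ∀ e ∈ M, ∀ f ∈ M, e ≠ f → ∀ v : V, v ∈ e → v ∉ f)
    (y : V → β) :
    ∑ e ∈ M, ∑ v ∈ e.toFinset, y v = ∑ v with ¬ isFreeV M v, y v := by
  have hcover : M.biUnion Sym2.toFinset = univ.filter (¬ isFreeV M ·) := by
    ext v
    simp [isFreeV]
  rw [← hcover, sum_biUnion]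
  intro e he f hf hef
  simpa [Function.onFun, disjoint_left] using hdisj e he f hf hef

theorem dualObj_eq_weight_add_free_general {V : Type*} [Fintype V] (G : SimpleGraph V)
    (w : Sym2 V → ℤ) (y : V → ℤ) (z : Finset V → ℤ)
    (M : Finset (Sym2 V)) (hM : IsMatchingF G M)
    (htight : ∀ e ∈ M, yzE y z e = w e)
    (hactive : ∀ B : Finset V, z B ≠ 0 → (edgesWithin M B).card = B.card / 2) :
    dualObj y z = (∑ e ∈ M, w e) + ∑ u ∈ Finset.univ.filter (fun u => isFreeV M u), y u := by
  have hz : ∑ B : Finset V, z B * ((B.card / 2 : ℕ) : ℤ) = ∑ B, z B * #(edgesWithin M B) := by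
    refine sum_congr rfl fun B _ => ?_
    obtain hB | hB := eq_or_ne (z B) 0
    · simp [hB]
    · rw [hactive B hB]
  have hw : ∑ e ∈ M, w e =
      ∑ e ∈ M, ∑ v ∈ e.toFinset, y v + ∑ e ∈ M, ∑ B with ∀ v ∈ e, v ∈ B, z B := by
    rw [← sum_add_distrib]
    refine sum_congr rfl fun e he => ?_
    rw [← htight e he, yzE_eq_of_not_isDiag y z (G.not_isDiag_of_mem_edgeSet (hM.1 e he))]
  rw [dualObj, hz, sum_mul_card_edgesWithin, hw, sum_sum_toFinset_eq_sum_not_isFreeV hM.2,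
    ← sum_filter_add_sum_filter_not univ (isFreeV M)]
  ring

/-- if `yz(e) = w(e)` on `M` and `M` has exactly `⌊|B|/2⌋` edges inside each
`B` with `z(B) ≠ 0`, then the dual objective equals `w(M)` plus the `y`-values of the
free vertices. -/
theorem dualObj_eq_weight_add_free {V : Type*} [Fintype V] (G : SimpleGraph V)
    (w : Sym2 V → ℤ) (y : V → ℤ) (z : Finset V → ℤ)
    (hsupp : ∀ B : Finset V, z B ≠ 0 → Odd B.card ∧ 3 ≤ B.card)
    (M : Finset (Sym2 V)) (hM : IsMatchingF G M)
    (htight : ∀ e ∈ M, yzE y z e = w e)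
    (hactive : ∀ B : Finset V, z B ≠ 0 → (edgesWithin M B).card = B.card / 2) :
    dualObj y z = (∑ e ∈ M, w e) + ∑ u ∈ Finset.univ.filter (fun u => isFreeV M u), y u :=
  dualObj_eq_weight_add_free_general G w y z M hM htight hactive
end
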